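/- If a sequence (p_n)_{n≥0} of non-negative reals with positive partial sums P_n has finite upper growth rate limsup_{n→∞} n·p_n/P_n < ∞, then for every fixed m ∈ ℕ, lim_{n→∞} P_{n-m}/P_n = 1. -/
import Mathlib


open Filter Finset

lemma ratio_one_step (p : ℕ → ℝ) (hp : ∀ n, 0 ≤ p n)
    (P : ℕ → ℝ) (hP : ∀ n, P n = ∑ k ∈ Finset.range (n + 1), p k)
    (hPpos : ∀ n, 0 < P n)
    (hgrowth : Filter.limsup (fun n : ℕ => (((n : ℝ) * p n / P n : ℝ) : EReal)) Filter.atTop < ⊤) :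
    Filter.Tendsto (fun n : ℕ => P (n - 1) / P n) Filter.atTop (nhds 1) := by
  obtain ⟨c, hc, -⟩ := EReal.lt_iff_exists_real_btwn.mp hgrowth
  have hev : ∀ᶠ n : ℕ in atTop, (((n : ℝ) * p n / P n : ℝ) : EReal) < (c : EReal) :=
    Filter.eventually_lt_of_limsup_lt hc
  have hmono : ∀ n, P (n - 1) ≤ P n := by
    intro n
    rw [hP, hP]
    exact Finset.sum_le_sum_of_subset_of_nonneg
      (Finset.range_subset_range.mpr (by omega)) (fun i _ _ => hp i)
  have hupper : ∀ n : ℕ, P (n - 1) / P n ≤ 1 := fun n =>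
    (div_le_one (hPpos n)).mpr (hmono n)
  have hlower : ∀ᶠ n : ℕ in atTop, 1 - c / n ≤ P (n - 1) / P n := by
    filter_upwards [hev, Filter.eventually_ge_atTop 1] with n hn hn1
    have hnpos : (0 : ℝ) < n := by exact_mod_cast hn1
    have hcn : (n : ℝ) * p n / P n ≤ c := le_of_lt (by exact_mod_cast hn)
    have hsplit : P n = P (n - 1) + p n := by
      rw [hP, hP]
      have : n - 1 + 1 = n := by omega
      rw [this, Finset.sum_range_succ]
    have hpP : p n / P n ≤ c / n := by
      rw [div_le_div_iff₀ (hPpos n) hnpos]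
      calc p n * n = n * p n := by ring
        _ ≤ c * P n := by
          rw [div_le_iff₀ (hPpos n)] at hcn; linarith
    have heq : P (n - 1) = P n - p n := by linarith
    rw [heq, sub_div, div_self (hPpos n).ne']
    linarith
  have hltend : Filter.Tendsto (fun n : ℕ => 1 - c / n) atTop (nhds 1) := by
    have := tendsto_const_div_atTop_nhds_zero_nat c
    simpa using (tendsto_const_nhds (x := (1:ℝ)) (f := atTop)).sub this
  exact tendsto_of_tendsto_of_tendsto_of_le_of_le' hltend tendsto_const_nhds
    hlower (Filter.Eventually.of_forall hupper)

/-- Finite upper growth rate implies P_{n-m}/P_n → 1 for every fixed m. -/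
theorem ratio_shift_tendsto_one (p : ℕ → ℝ) (hp : ∀ n, 0 ≤ p n)
    (P : ℕ → ℝ) (hP : ∀ n, P n = ∑ k ∈ Finset.range (n + 1), p k)
    (hPpos : ∀ n, 0 < P n)
    (hgrowth : Filter.limsup (fun n : ℕ => (((n : ℝ) * p n / P n : ℝ) : EReal)) Filter.atTop < ⊤)
    (m : ℕ) :
    Filter.Tendsto (fun n : ℕ => P (n - m) / P n) Filter.atTop (nhds 1) := by
  induction m with
  | zero =>
      have : (fun n : ℕ => P (n - 0) / P n) = fun _ => (1:ℝ) :=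
        funext fun n => by simp [div_self (hPpos n).ne']
      rw [this]; exact tendsto_const_nhds
  | succ m ih =>
      have h1 := ratio_one_step p hp P hP hPpos hgrowth
      have hcomp : Filter.Tendsto (fun n : ℕ => P (n - 1 - m) / P (n - 1)) atTop (nhds 1) :=
        ih.comp (tendsto_sub_atTop_nat 1)
      have := hcomp.mul h1
      rw [mul_one] at this
      refine this.congr' ?_
      filter_upwards with n
      have hne : P (n - 1) ≠ 0 := (hPpos _).ne'
      have : n - 1 - m = n - (m + 1) := by omega
      rw [this]
      field_simp
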